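/- For PSD n×n Hermitian matrices A, B and every real u ≥ 0: tr((A−u)_+) + tr((B−u)_+) ≤ tr((A+B−u)_+), where (X)_+ = (X+|X|)/2 is the positive part and (A−u)_+ means (A − uI)_+. -/

import Mathlib

open Matrix
open scoped ComplexOrder

/-- `f` applied to a matrix via the spectral decomposition (junk value `0` if
the matrix is not Hermitian). -/
noncomputable def matFun {n : ℕ} (f : ℝ → ℝ) (A : Matrix (Fin n) (Fin n) ℂ) :
    Matrix (Fin n) (Fin n) ℂ :=
  if hA : A.IsHermitian then
    (hA.eigenvectorUnitary : Matrix (Fin n) (Fin n) ℂ) *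
      Matrix.diagonal (fun i => (f (hA.eigenvalues i) : ℂ)) *
      (star hA.eigenvectorUnitary : Matrix (Fin n) (Fin n) ℂ)
  else 0

/-- The eigenvalues of a Hermitian matrix, sorted in non-increasing order
(junk value `0` if the matrix is not Hermitian). -/
noncomputable def eigsDesc {n : ℕ} (A : Matrix (Fin n) (Fin n) ℂ) : Fin n → ℝ :=
  if hA : A.IsHermitian then (fun k => hA.eigenvalues (Tuple.sort hA.eigenvalues (Fin.rev k)))
  else 0

/-- The absolute value `|X| = (XᴴX)^{1/2}` of a matrix. -/
noncomputable def matAbs {n : ℕ} (X : Matrix (Fin n) (Fin n) ℂ) : Matrix (Fin n) (Fin n) ℂ :=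
  (Matrix.posSemidef_conjTranspose_mul_self X).isHermitian.eigenvectorUnitary.1 *
    diagonal ((↑) ∘ (√·) ∘ (Matrix.posSemidef_conjTranspose_mul_self X).isHermitian.eigenvalues) *
    (star (Matrix.posSemidef_conjTranspose_mul_self X).isHermitian.eigenvectorUnitary :
      Matrix (Fin n) (Fin n) ℂ)

/-- The singular values of `X`, sorted in non-increasing order. -/
noncomputable def svalsDesc {n : ℕ} (X : Matrix (Fin n) (Fin n) ℂ) : Fin n → ℝ :=
  eigsDesc (matAbs X)

/-- Sum of the first `k` entries of a vector indexed by `Fin n`. -/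
noncomputable def kSum {n : ℕ} (μ : Fin n → ℝ) (k : ℕ) : ℝ :=
  ∑ j ∈ Finset.univ.filter (fun j : Fin n => (j : ℕ) < k), μ j

/-- The operator norm: the largest singular value. -/
noncomputable def opNorm {n : ℕ} (X : Matrix (Fin n) (Fin n) ℂ) : ℝ :=
  ⨆ i, svalsDesc X i

/-! Let `P`, `Q` be the spectral projections of `A - u` and `B - u` onto their positive
eigenspaces, so that `tr (A - u)₊ = tr (A P) - u tr P`, and let `T` be the orthogonal projection
onto `range P + range Q`, so that `P, Q ≤ T` and `tr T ≤ tr P + tr Q`. Since `Z ≤ Z₊` and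
`0 ≤ Z₊`, every `0 ≤ T ≤ 1` has `tr (Z T) ≤ tr Z₊`; with `Z = A + B - u` this gives
`tr (A + B - u)₊ ≥ tr (A T) + tr (B T) - u tr T ≥ tr (A P) + tr (B Q) - u (tr P + tr Q)`,
using `A, B ≥ 0` and `u ≥ 0`. -/

open scoped MatrixOrder

namespace Matrix

variable {ι 𝕜 : Type*} [Fintype ι] [RCLike 𝕜]

lemma re_trace_ofReal_smul (c : ℝ) (M : Matrix ι ι 𝕜) :
    RCLike.re ((c : 𝕜) • M).trace = c * RCLike.re M.trace := by
  rw [trace_smul, smul_eq_mul, RCLike.re_ofReal_mul]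

variable [DecidableEq ι]

lemma isSelfAdjoint_sub_ofReal_smul_one {A : Matrix ι ι 𝕜} (hA : IsSelfAdjoint A) (c : ℝ) :
    IsSelfAdjoint (A - (c : 𝕜) • 1) :=
  hA.sub (IsSelfAdjoint.smul (RCLike.conj_ofReal c) (.one _))

lemma trace_eq_finrank_range_of_isIdempotentElem {E : Matrix ι ι 𝕜} (hE : IsIdempotentElem E) :
    E.trace = Module.finrank 𝕜 (LinearMap.range (toEuclideanLin E)) := by
  have h : IsIdempotentElem (toEuclideanLin E) :=
    ContinuousLinearMap.IsIdempotentElem.toLinearMap (hE.map (toEuclideanCLM (𝕜 := 𝕜)))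
  rw [← (LinearMap.IsIdempotentElem.isProj_range _ h).trace, toEuclideanLin_eq_toLin_orthonormal,
    LinearMap.trace_eq_matrix_trace 𝕜 (EuclideanSpace.basisFun ι 𝕜).toBasis,
    LinearMap.toMatrix_toLin]

lemma exists_isStarProjection_ge_and_re_trace_le_add {P Q : Matrix ι ι 𝕜}
    (hP : IsStarProjection P) (hQ : IsStarProjection Q) :
    ∃ T : Matrix ι ι 𝕜, IsStarProjection T ∧ P ≤ T ∧ Q ≤ T ∧
      RCLike.re T.trace ≤ RCLike.re P.trace + RCLike.re Q.trace := by
  set V := LinearMap.range (toEuclideanLin P) ⊔ LinearMap.range (toEuclideanLin Q)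
  let e : Matrix ι ι 𝕜 ≃⋆ₐ[𝕜] _ := toEuclideanCLM
  set T := e.symm V.starProjection
  have hT : IsStarProjection T := (isStarProjection_starProjection (U := V)).map e.symm
  have hle {R : Matrix ι ι 𝕜} (hR : IsStarProjection R)
      (hRV : LinearMap.range (toEuclideanLin R) ≤ V) : R ≤ T := by
    have hTR : T * R = R := EquivLike.injective e <| by
      ext1 x
      rw [map_mul e, e.apply_symm_apply]
      exact V.starProjection_eq_self_iff.mpr (hRV ⟨x, rfl⟩)
    exact sub_nonneg.mp (hR.sub_of_mul_eq_right hT hTR).nonneg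
  refine ⟨T, hT, hle hP le_sup_left, hle hQ le_sup_right, ?_⟩
  have hV : LinearMap.range (toEuclideanLin T) = V := by
    rw [← coe_toEuclideanCLM_eq_toEuclideanLin, e.apply_symm_apply]
    exact V.range_starProjection
  rw [trace_eq_finrank_range_of_isIdempotentElem hT.isIdempotentElem,
    trace_eq_finrank_range_of_isIdempotentElem hP.isIdempotentElem,
    trace_eq_finrank_range_of_isIdempotentElem hQ.isIdempotentElem, hV]
  simp only [RCLike.natCast_re]
  exact_mod_cast Submodule.finrank_add_le_finrank_add_finrank _ _

lemma re_trace_mul_nonneg {M N : Matrix ι ι 𝕜} (hM : 0 ≤ M) (hN : 0 ≤ N) :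
    0 ≤ RCLike.re (M * N).trace := by
  have hS := (CFC.sqrt_nonneg N).isSelfAdjoint
  rw [← CFC.sqrt_mul_sqrt_self N, ← mul_assoc, trace_mul_cycle]
  have := (star_left_conjugate_nonneg hM (CFC.sqrt N)).posSemidef.trace_nonneg
  rw [hS.star_eq] at this
  exact (RCLike.nonneg_iff.mp this).1

lemma re_trace_mul_le_of_le {A M N : Matrix ι ι 𝕜} (hA : 0 ≤ A) (hMN : M ≤ N) :
    RCLike.re (A * M).trace ≤ RCLike.re (A * N).trace := by
  have := re_trace_mul_nonneg hA (sub_nonneg.mpr hMN)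
  rwa [mul_sub, trace_sub, map_sub, sub_nonneg] at this

lemma isStarProjection_cfc_indicator (s : Set ℝ) (A : Matrix ι ι 𝕜) :
    IsStarProjection (cfc (s.indicator 1) A) where
  isIdempotentElem := by
    have hc := A.finite_real_spectrum.continuousOn (s.indicator (1 : ℝ → ℝ))
    rw [IsIdempotentElem, ← cfc_mul _ _ A hc hc]
    congr 1
    ext x
    by_cases hx : x ∈ s <;> simp [hx]
  isSelfAdjoint := cfc_predicate _ A

lemma mul_cfc_indicator_Ioi {A : Matrix ι ι 𝕜} (hA : IsSelfAdjoint A) :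
    A * cfc ((Set.Ioi (0 : ℝ)).indicator (1 : ℝ → ℝ)) A = cfc (fun x : ℝ => max x 0) A := by
  have hc := A.finite_real_spectrum.continuousOn ((Set.Ioi (0 : ℝ)).indicator (1 : ℝ → ℝ))
  nth_rewrite 1 [← cfc_id' ℝ A]
  rw [← cfc_mul (fun x => x) _ A continuousOn_id hc]
  congr 1
  ext x
  by_cases hx : 0 < x
  · simp [hx, hx.le]
  · simp [hx, not_lt.mp hx]

lemma le_cfc_max_zero {A : Matrix ι ι 𝕜} (hA : IsSelfAdjoint A) :
    A ≤ cfc (fun x : ℝ => max x 0) A := by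
  conv_lhs => rw [← cfc_id' ℝ A]
  exact cfc_mono fun x _ => le_max_left x 0

lemma cfc_max_zero_nonneg (A : Matrix ι ι 𝕜) : 0 ≤ cfc (fun x : ℝ => max x 0) A :=
  cfc_nonneg fun x _ => le_max_right x 0

lemma re_trace_mul_le_re_trace_cfc_max_zero {Z T : Matrix ι ι 𝕜} (hZ : IsSelfAdjoint Z)
    (hT₀ : 0 ≤ T) (hT₁ : T ≤ 1) :
    RCLike.re (Z * T).trace ≤ RCLike.re (cfc (fun x : ℝ => max x 0) Z).trace := by
  have h₁ := re_trace_mul_nonneg (sub_nonneg.mpr (le_cfc_max_zero hZ)) hT₀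
  have h₂ := re_trace_mul_nonneg (cfc_max_zero_nonneg Z) (sub_nonneg.mpr hT₁)
  simp only [sub_mul, mul_sub, mul_one, trace_sub, map_sub] at h₁ h₂
  linarith

lemma re_trace_mul_cfc_indicator_Ioi_sub {A : Matrix ι ι 𝕜} (hA : IsSelfAdjoint A) (c : ℝ) :
    RCLike.re (A * cfc ((Set.Ioi (0 : ℝ)).indicator (1 : ℝ → ℝ)) (A - (c : 𝕜) • 1)).trace =
      RCLike.re (cfc (fun x : ℝ => max x 0) (A - (c : 𝕜) • 1)).trace +
        c * RCLike.re (cfc ((Set.Ioi (0 : ℝ)).indicator (1 : ℝ → ℝ)) (A - (c : 𝕜) • 1)).trace := by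
  rw [← mul_cfc_indicator_Ioi (isSelfAdjoint_sub_ofReal_smul_one hA c), sub_mul, smul_mul_assoc,
    one_mul, trace_sub, map_sub, re_trace_ofReal_smul]
  ring

theorem re_trace_cfc_max_zero_sub_smul_add_le {A B : Matrix ι ι 𝕜} (hA : 0 ≤ A) (hB : 0 ≤ B)
    {u : ℝ} (hu : 0 ≤ u) :
    RCLike.re (cfc (fun x : ℝ => max x 0) (A - (u : 𝕜) • 1)).trace +
        RCLike.re (cfc (fun x : ℝ => max x 0) (B - (u : 𝕜) • 1)).trace ≤
      RCLike.re (cfc (fun x : ℝ => max x 0) (A + B - (u : 𝕜) • 1)).trace := by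
  obtain ⟨T, hT, hPT, hQT, htr⟩ := exists_isStarProjection_ge_and_re_trace_le_add
    (isStarProjection_cfc_indicator (Set.Ioi 0) (A - (u : 𝕜) • 1))
    (isStarProjection_cfc_indicator (Set.Ioi 0) (B - (u : 𝕜) • 1))
  have hAT := re_trace_mul_le_of_le hA hPT
  have hBT := re_trace_mul_le_of_le hB hQT
  rw [re_trace_mul_cfc_indicator_Ioi_sub hA.isSelfAdjoint] at hAT
  rw [re_trace_mul_cfc_indicator_Ioi_sub hB.isSelfAdjoint] at hBT
  have hZT := re_trace_mul_le_re_trace_cfc_max_zero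
    (isSelfAdjoint_sub_ofReal_smul_one (hA.isSelfAdjoint.add hB.isSelfAdjoint) u) hT.nonneg
    (sub_nonneg.mp hT.one_sub.nonneg)
  rw [sub_mul, add_mul, smul_mul_assoc, one_mul, trace_sub, trace_add, map_sub, map_add,
    re_trace_ofReal_smul] at hZT
  nlinarith [mul_le_mul_of_nonneg_left htr hu]

end Matrix

lemma matFun_eq_cfc {n : ℕ} (f : ℝ → ℝ) {A : Matrix (Fin n) (Fin n) ℂ} (hA : A.IsHermitian) :
    matFun f A = cfc f A := by
  rw [hA.cfc_eq, IsHermitian.cfc, matFun, dif_pos hA, Unitary.conjStarAlgAut_apply]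
  rfl

/-- For PSD `A, B` and `u ≥ 0`:
`tr((A−u)₊) + tr((B−u)₊) ≤ tr((A+B−u)₊)`. -/
theorem trace_posPart_subadd {n : ℕ} (A B : Matrix (Fin n) (Fin n) ℂ)
    (hA : A.PosSemidef) (hB : B.PosSemidef) (u : ℝ) (hu : 0 ≤ u) :
    ((matFun (fun x => max x 0) (A - (u : ℂ) • 1)).trace).re +
      ((matFun (fun x => max x 0) (B - (u : ℂ) • 1)).trace).re ≤
      ((matFun (fun x => max x 0) (A + B - (u : ℂ) • 1)).trace).re := by
  have hsa {M : Matrix (Fin n) (Fin n) ℂ} (hM : M.PosSemidef) : (M - (u : ℂ) • 1).IsHermitian :=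
    isSelfAdjoint_sub_ofReal_smul_one hM.isHermitian u
  rw [matFun_eq_cfc _ (hsa hA), matFun_eq_cfc _ (hsa hB), matFun_eq_cfc _ (hsa (hA.add hB))]
  exact re_trace_cfc_max_zero_sub_smul_add_le hA.nonneg hB.nonneg hu
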